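/- arXiv:0705.1833 — 2 statements merged into one kernel-verified Lean document; each statement's English description precedes it below -/
import Mathlib

section
/- The Hamiltonian H2 satisfies H2(1−q1, −p1, 1−q2, −p2, 1−t, 1−s; κ1, κ0, θ1, θ2) = −H2(q1, p1, q2, p2, t, s; κ0, κ1, θ1, θ2) for all complex q1,p1,q2,p2,t,s such that q1 ≠ q2, s ∉ {0,1}, s ≠ t, and q1, q2 ∉ {0, 1, t, s}. -/
/-- The quadratic form `B(q,p)` appearing in the Garnier Hamiltonian, with
`κ = ((κ0+κ1+θ1+θ2-1)² - κ∞²)/4`. -/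
noncomputable def garnierB (κ0 κ1 κinf θ1 θ2 t s q p : ℂ) : ℂ :=
  p ^ 2 + (((κ0 + κ1 + θ1 + θ2 - 1) ^ 2 - κinf ^ 2) / 4) / (q * (q - 1)) -
    ((θ1 - 1) / (q - t) + θ2 / (q - s) + κ0 / q + κ1 / (q - 1)) * p

/-- The Hamiltonian `H1` of the Garnier system in two variables. -/
noncomputable def garnierH1 (κ0 κ1 κinf θ1 θ2 q1 p1 q2 p2 t s : ℂ) : ℂ :=
  -(q1 * (q1 - 1) * (q1 - t) * (q1 - s) * (q2 - t)) /
      ((q1 - q2) * t * (t - 1) * (t - s)) *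
      garnierB κ0 κ1 κinf θ1 θ2 t s q1 p1 -
    (q2 * (q2 - 1) * (q2 - t) * (q2 - s) * (q1 - t)) /
      ((q2 - q1) * t * (t - 1) * (t - s)) *
      garnierB κ0 κ1 κinf θ1 θ2 t s q2 p2

/-- The second Hamiltonian `H2 = π(H1)` of the Garnier system in two variables,
where π is the swap `(q1,p1,q2,p2,t,s;θ1,θ2) ↦ (q2,p2,q1,p1,s,t;θ2,θ1)`. -/
noncomputable def garnierH2 (κ0 κ1 κinf θ1 θ2 q1 p1 q2 p2 t s : ℂ) : ℂ :=
  garnierH1 κ0 κ1 κinf θ2 θ1 q2 p2 q1 p1 s t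

lemma garnierB_sigma1 (a b κinf c d t s q p : ℂ) :
    garnierB b a κinf c d (1 - t) (1 - s) (1 - q) (-p) =
      garnierB a b κinf c d t s q p := by
  unfold garnierB
  have d1 : (1:ℂ) - q - (1 - t) = -(q - t) := by ring
  have d2 : (1:ℂ) - q - (1 - s) = -(q - s) := by ring
  have d3 : (1:ℂ) - q - 1 = -q := by ring
  have d4 : (1 - q) * (1 - q - 1) = q * (q - 1) := by ring
  have d5 : ((b + a + c + d - 1) ^ 2 - κinf ^ 2) / 4 =
      ((a + b + c + d - 1) ^ 2 - κinf ^ 2) / 4 := by ring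
  have dq : (1:ℂ) - q = -(q - 1) := by ring
  rw [d4, d1, d2, d3, d5, dq]
  simp only [div_neg]
  ring

/-- Invariance of the Garnier system under the Bäcklund transformation σ1, for the
second Hamiltonian:
`H2(1-q1, -p1, 1-q2, -p2, 1-t, 1-s; κ1, κ0, θ1, θ2) = -H2(q1, p1, q2, p2, t, s; κ0, κ1, θ1, θ2)`. -/
theorem garnierH2_sigma1 (κ0 κ1 κinf θ1 θ2 q1 p1 q2 p2 t s : ℂ)
    (hq : q1 ≠ q2) (hs0 : s ≠ 0) (hs1 : s ≠ 1) (hst : s ≠ t)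
    (hq10 : q1 ≠ 0) (hq11 : q1 ≠ 1) (hq1t : q1 ≠ t) (hq1s : q1 ≠ s)
    (hq20 : q2 ≠ 0) (hq21 : q2 ≠ 1) (hq2t : q2 ≠ t) (hq2s : q2 ≠ s) :
    garnierH2 κ1 κ0 κinf θ1 θ2 (1 - q1) (-p1) (1 - q2) (-p2) (1 - t) (1 - s) =
      -garnierH2 κ0 κ1 κinf θ1 θ2 q1 p1 q2 p2 t s := by
  unfold garnierH2 garnierH1
  rw [garnierB_sigma1 κ0 κ1 κinf θ2 θ1 s t q2 p2,
      garnierB_sigma1 κ0 κ1 κinf θ2 θ1 s t q1 p1]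
  generalize garnierB κ0 κ1 κinf θ2 θ1 s t q2 p2 = B2
  generalize garnierB κ0 κ1 κinf θ2 θ1 s t q1 p1 = B1
  have hqq : q2 - q1 ≠ 0 := sub_ne_zero.mpr fun h => hq h.symm
  have hqq' : q1 - q2 ≠ 0 := sub_ne_zero.mpr hq
  have h1 : (1:ℂ) - q2 - (1 - q1) ≠ 0 := by intro h; apply hqq; linear_combination -h
  have h2 : (1:ℂ) - q1 - (1 - q2) ≠ 0 := by intro h; apply hqq'; linear_combination -h
  have h3 : (1:ℂ) - s ≠ 0 := sub_ne_zero.mpr fun h => hs1 h.symm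
  have h4 : (1:ℂ) - s - 1 ≠ 0 := by intro h; apply hs0; linear_combination -h
  have h5 : (1:ℂ) - s - (1 - t) ≠ 0 := by intro h; apply hst; linear_combination -h
  have h6 : s - 1 ≠ 0 := sub_ne_zero.mpr hs1
  have h7 : s - t ≠ 0 := sub_ne_zero.mpr hst
  have e1 : -((1 - q2) * (1 - q2 - 1) * (1 - q2 - (1 - s)) * (1 - q2 - (1 - t)) *
        (1 - q1 - (1 - s))) /
      ((1 - q2 - (1 - q1)) * (1 - s) * (1 - s - 1) * (1 - s - (1 - t))) =
      q2 * (q2 - 1) * (q2 - s) * (q2 - t) * (q1 - s) / ((q2 - q1) * s * (s - 1) * (s - t)) := by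
    rw [div_eq_div_iff (by exact mul_ne_zero (mul_ne_zero (mul_ne_zero h1 h3) h4) h5)
      (by exact mul_ne_zero (mul_ne_zero (mul_ne_zero hqq hs0) h6) h7)]
    ring
  have e2 : -((1 - q1) * (1 - q1 - 1) * (1 - q1 - (1 - s)) * (1 - q1 - (1 - t)) *
        (1 - q2 - (1 - s))) /
      ((1 - q1 - (1 - q2)) * (1 - s) * (1 - s - 1) * (1 - s - (1 - t))) =
      q1 * (q1 - 1) * (q1 - s) * (q1 - t) * (q2 - s) / ((q1 - q2) * s * (s - 1) * (s - t)) := by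
    rw [div_eq_div_iff (by exact mul_ne_zero (mul_ne_zero (mul_ne_zero h2 h3) h4) h5)
      (by exact mul_ne_zero (mul_ne_zero (mul_ne_zero hqq' hs0) h6) h7)]
    ring
  linear_combination e1 * B2 + e2 * B1
end

section
/- The coordinate change r0 is symplectic: at every point (q1,p1,q2,p2) ∈ ℂ⁴ with p2 ≠ 0, the Jacobian matrix J of the map (q1,p1,q2,p2) ↦ (q1, p1, −(q2·p2 − κ0)·p2, 1/p2) satisfies Jᵀ · Ω · J = Ω, where Ω is the standard symplectic matrix with block-diagonal 2×2 blocks [[0,1],[−1,0]] in the coordinate ordering (q1,p1,q2,p2). Equivalently, dy0∧dx0 + dw0∧dz0 = dp1∧dq1 + dp2∧dq2 for (x0,y0,z0,w0) = (q1, p1, −(q2p2−κ0)p2, 1/p2). -/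
open Matrix

/-- The Jacobian matrix of a map `F : ℂ⁴ → ℂ⁴` at a point `x`: the 4×4 matrix of
partial derivatives, `J i j = ∂F_i/∂x_j`. -/
noncomputable def jacobian (F : (Fin 4 → ℂ) → (Fin 4 → ℂ)) (x : Fin 4 → ℂ) :
    Matrix (Fin 4) (Fin 4) ℂ :=
  Matrix.of fun i j => fderiv ℂ (fun y => F y i) x (Pi.single j 1)

/-- The standard symplectic matrix with block-diagonal 2×2 blocks `[[0,1],[-1,0]]`
in the coordinate ordering `(q1, p1, q2, p2)`. -/
def standardSymplectic : Matrix (Fin 4) (Fin 4) ℂ :=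
  !![0, 1, 0, 0; -1, 0, 0, 0; 0, 0, 0, 1; 0, 0, -1, 0]

/-- The coordinate chart `r0`:
`(q1,p1,q2,p2) ↦ (x0,y0,z0,w0) = (q1, p1, -(q2·p2 - κ0)·p2, 1/p2)`. -/
noncomputable def chartR0 (κ0 : ℂ) (x : Fin 4 → ℂ) : Fin 4 → ℂ :=
  ![x 0, x 1, -(x 2 * x 3 - κ0) * x 3, 1 / x 3]

lemma jac_eq (κ0 : ℂ) (x : Fin 4 → ℂ) (h : x 3 ≠ 0) :
    jacobian (chartR0 κ0) x =
      !![1,0,0,0; 0,1,0,0; 0,0,-(x 3)^2, κ0 - 2 * x 2 * x 3; 0,0,0, -(1/(x 3)^2)] := by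
  have h0 := hasFDerivAt_apply (𝕜 := ℂ) (0 : Fin 4) x
  have h1 := hasFDerivAt_apply (𝕜 := ℂ) (1 : Fin 4) x
  have h2 := hasFDerivAt_apply (𝕜 := ℂ) (2 : Fin 4) x
  have h3 := hasFDerivAt_apply (𝕜 := ℂ) (3 : Fin 4) x
  have Hz := (((h2.mul h3).sub_const κ0).neg.mul h3)
  have Hw : HasFDerivAt (fun y : Fin 4 → ℂ => 1 / y 3)
      ((ContinuousLinearMap.smulRight (1 : ℂ →L[ℂ] ℂ) (-(x 3 ^ 2)⁻¹)).comp
        (ContinuousLinearMap.proj 3)) x := by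
    have := (hasFDerivAt_inv h).comp x h3
    simp only [one_div]
    exact this
  have row0 : ∀ j, fderiv ℂ (fun y : Fin 4 → ℂ => y 0) x (Pi.single j 1)
      = ![(1:ℂ),0,0,0] j := by
    intro j
    rw [h0.fderiv]
    fin_cases j <;> simp [ContinuousLinearMap.proj, Pi.single_apply]
  have row1 : ∀ j, fderiv ℂ (fun y : Fin 4 → ℂ => y 1) x (Pi.single j 1)
      = ![(0:ℂ),1,0,0] j := by
    intro j
    rw [h1.fderiv]
    fin_cases j <;> simp [ContinuousLinearMap.proj, Pi.single_apply]
  have row2 : ∀ j, fderiv ℂ (fun y : Fin 4 → ℂ => -(y 2 * y 3 - κ0) * y 3) x (Pi.single j 1)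
      = ![(0:ℂ),0,-(x 3)^2, κ0 - 2 * x 2 * x 3] j := by
    intro j
    rw [HasFDerivAt.fderiv (f := fun y : Fin 4 → ℂ => -(y 2 * y 3 - κ0) * y 3) Hz]
    fin_cases j <;>
      simp [ContinuousLinearMap.proj, Pi.single_apply] <;> ring
  have row3 : ∀ j, fderiv ℂ (fun y : Fin 4 → ℂ => 1 / y 3) x (Pi.single j 1)
      = ![(0:ℂ),0,0, -(1/(x 3)^2)] j := by
    intro j
    rw [Hw.fderiv]
    fin_cases j <;>
      simp [ContinuousLinearMap.proj, Pi.single_apply] <;> ring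
  ext i j
  fin_cases i
  · exact row0 j
  · exact row1 j
  · exact row2 j
  · exact row3 j

/-- The coordinate change `r0` is symplectic: at every point with `p2 ≠ 0`, its
Jacobian matrix `J` satisfies `Jᵀ * Ω * J = Ω`, i.e.
`dy0∧dx0 + dw0∧dz0 = dp1∧dq1 + dp2∧dq2`. -/
theorem chartR0_symplectic (κ0 : ℂ) (x : Fin 4 → ℂ) (h : x 3 ≠ 0) :
    (jacobian (chartR0 κ0) x)ᵀ * standardSymplectic * jacobian (chartR0 κ0) x =
      standardSymplectic := by
  rw [jac_eq κ0 x h]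
  ext i j
  fin_cases i <;> fin_cases j <;>
    simp [standardSymplectic, Matrix.mul_apply, Fin.sum_univ_four, Matrix.vecHead,
      Matrix.vecTail, Matrix.transpose_apply] <;>
    field_simp <;>
    ring
end
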